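/- arXiv:2505.01922 — 4 statements merged into one kernel-verified Lean document; each statement's English description precedes it below -/
import Mathlib

section
/- Let R be a commutative ring such that the p-adic completion of R is p-torsion free, and suppose the Frobenius on R/pR is surjective with kernel generated by the image of an element π with π^p = pu for a unit u (so R is 'Witt-perfect'). Then the tilt R^♭ is p^♭-adically complete, where p^♭ = (p, p^{1/p}, p^{1/p²}, …) ∈ R^♭. -/
/-- The inverse limit `lim_n S/I n` of the quotients of a ring `S` by a decreasing chain of
ideals, realized as the subring of compatible families in the product. -/
def quotLim (S : Type*) [CommRing S] (I : ℕ → Ideal S) (h : ∀ n, I (n + 1) ≤ I n) :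
    Subring (∀ n, S ⧸ I n) where
  carrier := {f | ∀ n, Ideal.Quotient.factor (h n) (f (n + 1)) = f n}
  mul_mem' := by
    intro a b ha hb n
    simp only [Pi.mul_apply, map_mul, ha n, hb n]
  one_mem' := by
    intro n
    simp only [Pi.one_apply, map_one]
  add_mem' := by
    intro a b ha hb n
    simp only [Pi.add_apply, map_add, ha n, hb n]
  zero_mem' := by
    intro n
    simp only [Pi.zero_apply, map_zero]
  neg_mem' := by
    intro a ha n
    simp only [Pi.neg_apply, map_neg, ha n]

/-- The natural ring homomorphism from `S` to `lim_n S/I n`. -/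
def toQuotLim (S : Type*) [CommRing S] (I : ℕ → Ideal S) (h : ∀ n, I (n + 1) ≤ I n) :
    S →+* quotLim S I h :=
  RingHom.codRestrict (Pi.ringHom fun n => Ideal.Quotient.mk (I n)) _
    (fun x n => Ideal.Quotient.factor_mk (h n) x)

/-- The `t`-adic completion `lim_n S/t^nS` of a commutative ring `S`. -/
def adicLim (S : Type*) [CommRing S] (t : S) : Subring (∀ n, S ⧸ Ideal.span {t ^ n}) :=
  quotLim S (fun n => Ideal.span {t ^ n})
    (fun n => Ideal.span_singleton_le_span_singleton.mpr (pow_dvd_pow t (Nat.le_succ n)))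

/-- The element `p^♭ = (p, p^{1/p}, p^{1/p²}, …)` of the tilt `R^♭`, given a compatible
system `r` of `p`-power roots of `p` in `R`. -/
def pFlat (R : Type*) [CommRing R] (p : ℕ)
    (r : ℕ → R) (hr : ∀ n, r (n + 1) ^ p = r n) :
    Perfection (R ⧸ Ideal.span {(p : R)}) p :=
  ⟨fun n => Ideal.Quotient.mk _ (r n), fun n => by rw [← map_pow, hr n]⟩

section AuxLemmas

lemma quotLim_chain_le {S : Type*} [CommRing S] (I : ℕ → Ideal S) (h : ∀ n, I (n + 1) ≤ I n)
    {k l : ℕ} (hkl : k ≤ l) : I l ≤ I k := by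
  induction l, hkl using Nat.le_induction with
  | base => exact le_rfl
  | succ l hkl ih => exact le_trans (h l) ih

lemma r_pow_pn {R : Type*} [CommRing R] {p : ℕ} (r : ℕ → R) (hr0 : r 0 = (p : R))
    (hr : ∀ n, r (n + 1) ^ p = r n) : ∀ n, r n ^ p ^ n = (p : R) := by
  intro n
  induction n with
  | zero => simpa using hr0
  | succ n ih => rw [pow_succ', pow_mul, hr n, ih]

lemma small_of_p_mul_small {R : Type*} [CommRing R] {p : ℕ}
    (hptf : ∀ x : adicLim R (p : R), (p : adicLim R (p : R)) * x = 0 → x = 0)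
    (b : R) (hb : ∀ j, (p : R) ^ j ∣ (p : R) * b) : ∀ j, (p : R) ^ j ∣ b := by
  let ι : R →+* adicLim R (p : R) := toQuotLim R (fun n => Ideal.span {(p : R) ^ n})
    (fun n => Ideal.span_singleton_le_span_singleton.mpr (pow_dvd_pow _ (Nat.le_succ n)))
  have h0 : (p : adicLim R (p : R)) * ι b = 0 := by
    have h1 : ((p : ℕ) : adicLim R (p : R)) * ι b = ι ((p : R) * b) := by
      rw [← map_natCast ι p, ← map_mul]
    rw [h1]
    refine Subtype.ext (funext fun n => ?_)
    show Ideal.Quotient.mk (Ideal.span {(p : R) ^ n}) ((p : R) * b) = 0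
    exact Ideal.Quotient.eq_zero_iff_mem.mpr (Ideal.mem_span_singleton.mpr (hb n))
  have h1 : ι b = 0 := hptf (ι b) h0
  intro j
  have h2 : Ideal.Quotient.mk (Ideal.span {(p : R) ^ j}) b = 0 :=
    congrFun (congrArg Subtype.val h1) j
  exact Ideal.mem_span_singleton.mp (Ideal.Quotient.eq_zero_iff_mem.mp h2)

lemma small_of_ppow_mul_small {R : Type*} [CommRing R] {p : ℕ}
    (hptf : ∀ x : adicLim R (p : R), (p : adicLim R (p : R)) * x = 0 → x = 0) :
    ∀ (k : ℕ) (b : R), (∀ j, (p : R) ^ j ∣ (p : R) ^ k * b) → ∀ j, (p : R) ^ j ∣ b := by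
  intro k
  induction k with
  | zero => intro b hb; simpa using hb
  | succ k ih =>
    intro b hb
    refine small_of_p_mul_small hptf b (ih ((p : R) * b) fun j => ?_)
    have : (p : R) ^ k * ((p : R) * b) = (p : R) ^ (k + 1) * b := by ring
    rw [this]; exact hb j

lemma small_of_r_mul_small {R : Type*} [CommRing R] {p : ℕ} [Fact p.Prime]
    (hptf : ∀ x : adicLim R (p : R), (p : adicLim R (p : R)) * x = 0 → x = 0)
    (r : ℕ → R) (hr0 : r 0 = (p : R)) (hr : ∀ n, r (n + 1) ^ p = r n)
    (n : ℕ) (B : R) (hB : ∀ j, (p : R) ^ j ∣ r n * B) : ∀ j, (p : R) ^ j ∣ B := by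
  refine small_of_p_mul_small hptf B fun j => ?_
  have hpn : r n ^ (p ^ n - 1) * r n = (p : R) := by
    rw [← pow_succ, Nat.sub_add_cancel (Nat.one_le_pow _ _ (Fact.out : p.Prime).pos),
      r_pow_pn r hr0 hr]
  have h1 : (p : R) * B = r n ^ (p ^ n - 1) * (r n * B) := by rw [← mul_assoc, hpn]
  rw [h1]
  exact (hB j).mul_left _

lemma div_by_r {R : Type*} [CommRing R] {p : ℕ} [Fact p.Prime]
    (r : ℕ → R) (hr0 : r 0 = (p : R)) (hr : ∀ n, r (n + 1) ^ p = r n)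
    (S : Type*) [CommRing S] [Algebra R S] [IsLocalization.Away (p : R) S]
    (hic : ∀ x : S, IsIntegral R x → x ∈ (algebraMap R S).range)
    (hptf : ∀ x : adicLim R (p : R), (p : adicLim R (p : R)) * x = 0 → x = 0)
    (n : ℕ) (x y : R) (hxy : x ^ p ^ n = (p : R) * y) :
    ∃ w : R, ∀ j, (p : R) ^ j ∣ x - r n * w := by
  have hpu : IsUnit (algebraMap R S (p : R)) := IsLocalization.Away.algebraMap_isUnit (p : R)
  have hru : IsUnit (algebraMap R S (r n)) := by
    refine (isUnit_pow_iff (pow_ne_zero n (Fact.out : p.Prime).ne_zero)).mp ?_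
    rw [← map_pow, r_pow_pn r hr0 hr]
    exact hpu
  have hv := hru.unit
  have hvval : (hru.unit : S) = algebraMap R S (r n) := rfl
  obtain ⟨s, hvs⟩ : ∃ s : S, (hru.unit : S) * s = algebraMap R S x :=
    ⟨(↑hru.unit⁻¹ : S) * algebraMap R S x, by rw [← mul_assoc, Units.mul_inv, one_mul]⟩
  have hspow : s ^ p ^ n = algebraMap R S y := by
    refine hpu.mul_left_cancel ?_
    have h1 : (algebraMap R S (p : R)) = (hru.unit : S) ^ p ^ n := by
      rw [hvval, ← map_pow, r_pow_pn r hr0 hr]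
    calc algebraMap R S (p : R) * s ^ p ^ n = ((hru.unit : S) * s) ^ p ^ n := by
          rw [mul_pow, ← h1]
      _ = algebraMap R S (x ^ p ^ n) := by rw [hvs, map_pow]
      _ = algebraMap R S (p : R) * algebraMap R S y := by rw [hxy, map_mul]
  have hint : IsIntegral R s := by
    refine ⟨Polynomial.X ^ p ^ n - Polynomial.C y,
      Polynomial.monic_X_pow_sub_C y (pow_ne_zero n (Fact.out : p.Prime).ne_zero), ?_⟩
    simp [Polynomial.eval₂_sub, Polynomial.eval₂_pow, hspow]
  obtain ⟨w, hw⟩ := hic s hint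
  have hz : algebraMap R S (x - r n * w) = 0 := by
    rw [map_sub, map_mul, hw, ← hvval, hvs, sub_self]
  obtain ⟨m, hm⟩ := (IsLocalization.map_eq_zero_iff (Submonoid.powers (p : R)) S _).mp hz
  obtain ⟨k, hk⟩ := m.2
  refine ⟨w, small_of_ppow_mul_small hptf k _ fun j => ?_⟩
  have h5 : (p : R) ^ k * (x - r n * w) = 0 := by
    have h6 := hm
    rw [← hk] at h6
    exact h6
  rw [h5]
  exact dvd_zero _


lemma key_div (R : Type*) [CommRing R] (p : ℕ) [Fact p.Prime]
    [CharP (R ⧸ Ideal.span {(p : R)}) p]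
    (r : ℕ → R) (hr0 : r 0 = (p : R)) (hr : ∀ n, r (n + 1) ^ p = r n)
    (S : Type*) [CommRing S] [Algebra R S] [IsLocalization.Away (p : R) S]
    (hic : ∀ x : S, IsIntegral R x → x ∈ (algebraMap R S).range)
    (hptf : ∀ x : adicLim R (p : R), (p : adicLim R (p : R)) * x = 0 → x = 0) :
    ∀ (N : ℕ) (z : Perfection (R ⧸ Ideal.span {(p : R)}) p),
      Perfection.coeff _ p N z = 0 → pFlat R p r hr ^ p ^ N ∣ z := by
  intro N
  induction N with
  | zero =>
    intro z hz0
    rw [pow_zero, pow_one]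
    classical
    have hxe : ∀ n, ∃ xx : R, Ideal.Quotient.mk (Ideal.span {(p : R)}) xx
        = Perfection.coeff _ p n z := fun n => Ideal.Quotient.mk_surjective _
    choose x hx using hxe
    set X : ℕ → ℕ → R := fun n m => x (n + m) ^ p ^ m with hX
    -- compatibility of coefficients of z
    have hzc : ∀ n m, Perfection.coeff _ p (n + m) z ^ p ^ m = Perfection.coeff _ p n z := by
      intro n m
      induction m with
      | zero => simp
      | succ m ihm =>
        show Perfection.coeff _ p ((n + m) + 1) z ^ p ^ (m + 1) = _
        rw [pow_succ', pow_mul, Perfection.coeff_pow_p', ihm]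
    have hXmk : ∀ n m, Ideal.Quotient.mk (Ideal.span {(p : R)}) (X n m)
        = Perfection.coeff _ p n z := by
      intro n m
      show Ideal.Quotient.mk _ (x (n + m) ^ p ^ m) = _
      rw [map_pow, hx, hzc]
    have hdiv : ∀ n m, ∃ w, ∀ j, (p : R) ^ j ∣ X n m - r n * w := by
      intro n m
      have hmem : Ideal.Quotient.mk (Ideal.span {(p : R)}) (X 0 (n + m)) = 0 := by
        rw [hXmk]; exact hz0
      obtain ⟨y, hy⟩ :=
        Ideal.mem_span_singleton.mp (Ideal.Quotient.eq_zero_iff_mem.mp hmem)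
      have hpow : X n m ^ p ^ n = (p : R) * y := by
        have e1 : X n m ^ p ^ n = x (n + m) ^ p ^ (n + m) := by
          show (x (n + m) ^ p ^ m) ^ p ^ n = _
          rw [← pow_mul, ← pow_add, Nat.add_comm m n]
        have e2 : X 0 (n + m) = x (n + m) ^ p ^ (n + m) := by
          show x (0 + (n + m)) ^ p ^ (n + m) = _
          rw [Nat.zero_add]
        rw [e1, ← e2, hy]
      exact div_by_r r hr0 hr S hic hptf n (X n m) y hpow
    choose V hV using hdiv
    -- compatibility : p ∣ V (n+1) m ^ p - V n (m+1)
    have hcomp : ∀ n m, (p : R) ∣ V (n + 1) m ^ p - V n (m + 1) := by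
      intro n m
      have hXp : X (n + 1) m ^ p = X n (m + 1) := by
        show (x ((n + 1) + m) ^ p ^ m) ^ p = x (n + (m + 1)) ^ p ^ (m + 1)
        rw [← pow_mul, ← pow_succ, Nat.succ_add]
        rfl
      have key : ∀ j, (p : R) ^ j ∣ r n * (V (n + 1) m ^ p - V n (m + 1)) := by
        intro j
        obtain ⟨c, hc⟩ := sub_dvd_pow_sub_pow (r (n + 1) * V (n + 1) m) (X (n + 1) m) p
        have expand : r n * (V (n + 1) m ^ p - V n (m + 1))
            = (r (n + 1) * V (n + 1) m - X (n + 1) m) * c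
              + (X n (m + 1) - r n * V n (m + 1)) := by
          have h1 : r n * V (n + 1) m ^ p = (r (n + 1) * V (n + 1) m) ^ p := by
            rw [mul_pow, hr n]
          have h2 : (r (n + 1) * V (n + 1) m) ^ p
              = (r (n + 1) * V (n + 1) m - X (n + 1) m) * c + X n (m + 1) := by
            rw [← hXp]
            linear_combination hc
          rw [mul_sub, h1, h2]
          ring
        rw [expand]
        refine dvd_add (Dvd.dvd.mul_right ?_ c) (hV n (m + 1) j)
        have := hV (n + 1) m j
        rw [← neg_sub]
        exact dvd_neg.mpr this
      have hsmall := small_of_r_mul_small hptf r hr0 hr n _ key 1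
      rwa [pow_one] at hsmall
    -- stabilization : p ∣ V n 2 - V n 1
    have hstab : ∀ n, (p : R) ∣ V n 2 - V n 1 := by
      intro n
      have hd : (p : R) ∣ x (n + 2) ^ p - x (n + 1) := by
        have hmem : Ideal.Quotient.mk (Ideal.span {(p : R)}) (x (n + 2) ^ p - x (n + 1)) = 0 := by
          rw [map_sub, map_pow, hx, hx, sub_eq_zero]
          exact Perfection.coeff_pow_p' z (n + 1)
        exact Ideal.mem_span_singleton.mp (Ideal.Quotient.eq_zero_iff_mem.mp hmem)
      have h2 : (p : R) ^ 2 ∣ X n 2 - X n 1 := by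
        have hdd := dvd_sub_pow_of_dvd_sub hd 1
        have e1 : (x (n + 2) ^ p) ^ p ^ 1 = X n 2 := by
          show _ = x (n + 2) ^ p ^ 2
          rw [← pow_mul, pow_one, sq]
        have e2 : x (n + 1) ^ p ^ 1 = X n 1 := by
          show _ = x (n + 1) ^ p ^ 1
          rfl
        rw [e1, e2] at hdd
        exact hdd
      obtain ⟨c, hc⟩ := h2
      have hone : 1 ≤ 2 * p ^ n := by
        have := Nat.one_le_pow n p (Fact.out : p.Prime).pos
        omega
      have hr2 : r n * r n ^ (2 * p ^ n - 1) = (p : R) ^ 2 := by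
        rw [← pow_succ', Nat.sub_add_cancel hone, mul_comm 2 (p ^ n), pow_mul,
          r_pow_pn r hr0 hr]
      set B' := V n 2 - V n 1 - r n ^ (2 * p ^ n - 1) * c with hB'
      have hrB' : ∀ j, (p : R) ^ j ∣ r n * B' := by
        intro j
        have expand : r n * B' = (X n 1 - r n * V n 1) - (X n 2 - r n * V n 2) := by
          rw [hB']
          linear_combination hc - c * hr2
        rw [expand]
        exact dvd_sub (hV n 1 j) (hV n 2 j)
      have hsB' := small_of_r_mul_small hptf r hr0 hr n B' hrB' 1
      rw [pow_one] at hsB'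
      have hpr : (p : R) ∣ r n ^ (2 * p ^ n - 1) * c := by
        have hexp : r n ^ (2 * p ^ n - 1) = (p : R) * r n ^ (2 * p ^ n - 1 - p ^ n) := by
          rw [← r_pow_pn r hr0 hr n, ← pow_add]
          congr 1
          have := Nat.one_le_pow n p (Fact.out : p.Prime).pos
          omega
        rw [hexp, mul_assoc]
        exact Dvd.intro _ rfl
      have := dvd_add hsB' hpr
      simpa [hB'] using this
    -- assemble the quotient element
    refine ⟨(⟨fun n => Ideal.Quotient.mk (Ideal.span {(p : R)}) (V n 1), fun n => ?_⟩ :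
      Perfection (R ⧸ Ideal.span {(p : R)}) p), ?_⟩
    · show Ideal.Quotient.mk (Ideal.span {(p : R)}) (V (n + 1) 1) ^ p
        = Ideal.Quotient.mk (Ideal.span {(p : R)}) (V n 1)
      have h1 : Ideal.Quotient.mk (Ideal.span {(p : R)}) (V (n + 1) 1) ^ p
          = Ideal.Quotient.mk (Ideal.span {(p : R)}) (V n 2) := by
        rw [← map_pow]
        exact Ideal.Quotient.eq.mpr (Ideal.mem_span_singleton.mpr (hcomp n 1))
      have h2 : Ideal.Quotient.mk (Ideal.span {(p : R)}) (V n 2)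
          = Ideal.Quotient.mk (Ideal.span {(p : R)}) (V n 1) :=
        Ideal.Quotient.eq.mpr (Ideal.mem_span_singleton.mpr (hstab n))
      rw [h1, h2]
    · refine Subtype.ext (funext fun n => ?_)
      show Perfection.coeff _ p n z = Perfection.coeff _ p n (pFlat R p r hr)
        * Ideal.Quotient.mk (Ideal.span {(p : R)}) (V n 1)
      have hcoe1 : Perfection.coeff _ p n (pFlat R p r hr)
          = Ideal.Quotient.mk (Ideal.span {(p : R)}) (r n) := rfl
      rw [hcoe1]
      show Perfection.coeff _ p n z
        = Ideal.Quotient.mk (Ideal.span {(p : R)}) (r n)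
          * Ideal.Quotient.mk (Ideal.span {(p : R)}) (V n 1)
      rw [← map_mul, ← hXmk n 1]
      refine Ideal.Quotient.eq.mpr (Ideal.mem_span_singleton.mpr ?_)
      have := hV n 1 1
      rwa [pow_one] at this
  | succ N ih =>
    intro z hz
    set z' : Perfection (R ⧸ Ideal.span {(p : R)}) p :=
      ⟨fun n => Perfection.coeff _ p (n + 1) z,
        fun n => Perfection.coeff_pow_p' z (n + 1)⟩ with hz'def
    have hz' : Perfection.coeff _ p N z' = 0 := hz
    obtain ⟨w, hw⟩ := ih z' hz'
    refine ⟨w ^ p, ?_⟩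
    have hzz' : z = z' ^ p := by
      refine Subtype.ext (funext fun n => ?_)
      show Perfection.coeff _ p n z = Perfection.coeff _ p n (z' ^ p)
      rw [map_pow]
      have : Perfection.coeff _ p n z' = Perfection.coeff _ p (n + 1) z := rfl
      rw [this, Perfection.coeff_pow_p']
    rw [hzz', hw, mul_pow, ← pow_mul, ← pow_succ]


/-- Let `R` be a commutative ring whose `p`-adic completion is `p`-torsion free,
containing a compatible system `r` of `p`-power roots of `p`, integrally closed in `R[1/p]`,
such that the Frobenius on `R/pR` is surjective with kernel generated by the image of an
element `π` with `π^p = p·u` for a unit `u` (so `R` is Witt-perfect).  Then the tilt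
`R^♭ = lim_F R/pR` is `p^♭`-adically complete, where `p^♭ = (p, p^{1/p}, p^{1/p²}, …) ∈ R^♭`:
the natural map `R^♭ → lim_k R^♭/(p^♭)^k` is bijective. -/
theorem tilt_pFlat_adically_complete
    (R : Type*) [CommRing R] (p : ℕ) [Fact p.Prime]
    [CharP (R ⧸ Ideal.span {(p : R)}) p]
    (r : ℕ → R) (hr0 : r 0 = (p : R)) (hr : ∀ n, r (n + 1) ^ p = r n)
    (S : Type*) [CommRing S] [Algebra R S] [IsLocalization.Away (p : R) S]
    (hic : ∀ x : S, IsIntegral R x → x ∈ (algebraMap R S).range)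
    (hfrob : ∀ y : R ⧸ Ideal.span {(p : R)}, ∃ x, x ^ p = y)
    (π : R) (u : Rˣ) (hπu : π ^ p = (p : R) * u)
    (hkerF : ∀ x : R ⧸ Ideal.span {(p : R)},
      x ^ p = 0 ↔ x ∈ Ideal.span {Ideal.Quotient.mk (Ideal.span {(p : R)}) π})
    (hptf : ∀ x : adicLim R (p : R), (p : adicLim R (p : R)) * x = 0 → x = 0) :
    Function.Bijective (toQuotLim (Perfection (R ⧸ Ideal.span {(p : R)}) p)
      (fun k => Ideal.span {pFlat R p r hr ^ k})
      (fun k => Ideal.span_singleton_le_span_singleton.mpr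
        (pow_dvd_pow _ (Nat.le_succ k)))) := by
  constructor
  · -- injectivity
    intro a b hab
    have hdvd : ∀ k, pFlat R p r hr ^ k ∣ a - b := by
      intro k
      have h1 : Ideal.Quotient.mk (Ideal.span {pFlat R p r hr ^ k}) a
          = Ideal.Quotient.mk (Ideal.span {pFlat R p r hr ^ k}) b :=
        congrFun (congrArg Subtype.val hab) k
      exact Ideal.mem_span_singleton.mp (Ideal.Quotient.eq.mp h1)
    have hcoeff : ∀ n, Perfection.coeff _ p n (a - b) = 0 := by
      intro n
      obtain ⟨c, hc⟩ := hdvd (p ^ n)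
      rw [hc, map_mul, map_pow]
      have h2 : Perfection.coeff _ p n (pFlat R p r hr)
          = Ideal.Quotient.mk (Ideal.span {(p : R)}) (r n) := rfl
      have h3 : Ideal.Quotient.mk (Ideal.span {(p : R)}) (r n) ^ p ^ n = 0 := by
        rw [← map_pow, r_pow_pn r hr0 hr]
        exact Ideal.Quotient.eq_zero_iff_mem.mpr (Ideal.mem_span_singleton_self _)
      rw [h2, h3, zero_mul]
    have h0 : a - b = 0 := by
      refine Subtype.ext (funext fun n => ?_)
      show Perfection.coeff _ p n (a - b) = (0 : R ⧸ Ideal.span {(p : R)})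
      exact hcoeff n
    exact sub_eq_zero.mp h0
  · -- surjectivity
    intro f
    have hI : ∀ n : ℕ, Ideal.span {pFlat R p r hr ^ (n + 1)}
        ≤ Ideal.span {pFlat R p r hr ^ n} := fun n =>
      Ideal.span_singleton_le_span_singleton.mpr (pow_dvd_pow _ (Nat.le_succ n))
    have hf : ∀ k, Ideal.Quotient.factor (hI k) (f.val (k + 1)) = f.val k := f.2
    have hge : ∀ k, ∃ g, Ideal.Quotient.mk (Ideal.span {pFlat R p r hr ^ k}) g = f.val k :=
      fun k => Ideal.Quotient.mk_surjective _
    choose g hg using hge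
    have hstep : ∀ l, g (l + 1) - g l ∈ Ideal.span {pFlat R p r hr ^ l} := by
      intro l
      refine Ideal.Quotient.eq.mp ?_
      calc Ideal.Quotient.mk (Ideal.span {pFlat R p r hr ^ l}) (g (l + 1))
          = Ideal.Quotient.factor (hI l)
              (Ideal.Quotient.mk (Ideal.span {pFlat R p r hr ^ (l + 1)}) (g (l + 1))) :=
            (Ideal.Quotient.factor_mk (hI l) _).symm
        _ = Ideal.Quotient.factor (hI l) (f.val (l + 1)) := by rw [hg]
        _ = f.val l := hf l
        _ = Ideal.Quotient.mk (Ideal.span {pFlat R p r hr ^ l}) (g l) := (hg l).symm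
    have hsub : ∀ k l, k ≤ l → g l - g k ∈ Ideal.span {pFlat R p r hr ^ k} := by
      intro k l hkl
      induction l, hkl using Nat.le_induction with
      | base => simpa using (Ideal.span {pFlat R p r hr ^ k}).zero_mem
      | succ l hkl ihl =>
        have e : g (l + 1) - g k = (g (l + 1) - g l) + (g l - g k) := by ring
        rw [e]
        exact Ideal.add_mem _ (quotLim_chain_le (fun n => Ideal.span {pFlat R p r hr ^ n}) hI hkl (hstep l)) ihl
    have hcoeq : ∀ (nn k l : ℕ), p ^ nn ≤ k → k ≤ l →
        Perfection.coeff _ p nn (g l) = Perfection.coeff _ p nn (g k) := by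
      intro nn k l h1 h2
      obtain ⟨c, hc⟩ := Ideal.mem_span_singleton.mp (hsub k l h2)
      have h3 : Perfection.coeff _ p nn (g l) - Perfection.coeff _ p nn (g k)
          = Ideal.Quotient.mk (Ideal.span {(p : R)}) (r nn) ^ k
            * Perfection.coeff _ p nn c := by
        rw [← map_sub, hc, map_mul, map_pow]
        rfl
      have h4 : Ideal.Quotient.mk (Ideal.span {(p : R)}) (r nn) ^ k = 0 := by
        rw [← map_pow]
        refine Ideal.Quotient.eq_zero_iff_mem.mpr (Ideal.mem_span_singleton.mpr ?_)
        have e : r nn ^ k = r nn ^ p ^ nn * r nn ^ (k - p ^ nn) := by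
          rw [← pow_add]
          congr 1
          omega
        rw [e, r_pow_pn r hr0 hr]
        exact Dvd.intro _ rfl
      rw [h4, zero_mul] at h3
      exact sub_eq_zero.mp h3
    have main : ∀ xA : Perfection (R ⧸ Ideal.span {(p : R)}) p,
        (∀ n, Perfection.coeff _ p n xA = Perfection.coeff _ p n (g (p ^ n))) →
        toQuotLim (Perfection (R ⧸ Ideal.span {(p : R)}) p)
          (fun k => Ideal.span {pFlat R p r hr ^ k})
          (fun k => Ideal.span_singleton_le_span_singleton.mpr
            (pow_dvd_pow _ (Nat.le_succ k))) xA = f := by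
      intro xA hxA
      refine Subtype.ext (funext fun k => ?_)
      show Ideal.Quotient.mk (Ideal.span {pFlat R p r hr ^ k}) xA = f.val k
      rw [← hg k]
      refine Ideal.Quotient.eq.mpr ?_
      have h1 : k ≤ p ^ k := le_of_lt (Nat.lt_pow_self (n := k) (Fact.out : p.Prime).one_lt)
      have hc0 : Perfection.coeff _ p k (xA - g (p ^ k)) = 0 := by
        rw [map_sub, hxA k, sub_self]
      have hdv : pFlat R p r hr ^ p ^ k ∣ xA - g (p ^ k) :=
        key_div R p r hr0 hr S hic hptf k (xA - g (p ^ k)) hc0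
      have e : xA - g k = (xA - g (p ^ k)) + (g (p ^ k) - g k) := by ring
      rw [e]
      exact Ideal.add_mem _
        (quotLim_chain_le (fun n => Ideal.span {pFlat R p r hr ^ n}) hI h1
          (Ideal.mem_span_singleton.mpr hdv))
        (hsub k (p ^ k) h1)
    have hprop : ∀ n : ℕ, (fun n => Perfection.coeff
          (R ⧸ Ideal.span {(p : R)}) p n (g (p ^ n))) (n + 1) ^ p
        = (fun n => Perfection.coeff (R ⧸ Ideal.span {(p : R)}) p n (g (p ^ n))) n := by
      intro n
      show Perfection.coeff _ p (n + 1) (g (p ^ (n + 1))) ^ p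
        = Perfection.coeff _ p n (g (p ^ n))
      rw [Perfection.coeff_pow_p']
      exact hcoeq n (p ^ n) (p ^ (n + 1)) le_rfl
        (Nat.pow_le_pow_right (Fact.out : p.Prime).pos (Nat.le_succ n))
    exact ⟨⟨fun n => Perfection.coeff _ p n (g (p ^ n)), hprop⟩, main _ fun n => rfl⟩
end AuxLemmas
end

section
/- Let A → B be an injective integral extension of rings such that A is integrally closed in A[1/p] and B is p-torsion free. Then for all n > 0 the induced map A/p^nA → B/p^nB is injective, and hence the induced map of p-adic completions Â → B̂ is injective. -/
/-- The induced map `A/p^nA → B/p^nB` of an algebra map `A → B`. -/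
def qmap (A B : Type*) [CommRing A] [CommRing B] [Algebra A B] (p n : ℕ) :
    A ⧸ Ideal.span {(p : A) ^ n} →+* B ⧸ Ideal.span {(p : B) ^ n} :=
  Ideal.quotientMap (Ideal.span {(p : B) ^ n}) (algebraMap A B) (by
    rw [Ideal.span_le, Set.singleton_subset_iff, SetLike.mem_coe, Ideal.mem_comap,
      map_pow, map_natCast]
    exact Ideal.subset_span rfl)


theorem key_lemma
    (A B : Type*) [CommRing A] [CommRing B] (p : ℕ)
    [Algebra A B] (hinj : Function.Injective (algebraMap A B))
    [Algebra.IsIntegral A B]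
    (hAtf : ∀ x : A, (p : A) * x = 0 → x = 0)
    (S : Type*) [CommRing S] [Algebra A S] [IsLocalization.Away (p : A) S]
    (hic : ∀ x : S, IsIntegral A x → x ∈ (algebraMap A S).range)
    (n : ℕ) (a : A) (h : algebraMap A B a ∈ Ideal.span {(p : B) ^ n}) :
    a ∈ Ideal.span {(p : A) ^ n} := by
  have hSinj : Function.Injective (algebraMap A S) := by
    apply IsLocalization.injective S (M := Submonoid.powers (p : A))
    rw [Submonoid.powers_le]
    exact mem_nonZeroDivisors_iff_right.mpr fun x hx => hAtf x (by rw [← hx]; ring)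
  rw [Ideal.mem_span_singleton] at h ⊢
  obtain ⟨b, hb⟩ := h
  obtain ⟨f, hfmonic, hfb⟩ := Algebra.IsIntegral.isIntegral (R := A) b
  set g := f.scaleRoots ((p : A) ^ n) with hg
  have hga : Polynomial.eval a g = 0 := by
    apply hinj
    rw [map_zero, ← Polynomial.eval₂_at_apply]
    have hba : algebraMap A B a = algebraMap A B ((p : A) ^ n) * b := by
      rw [hb, map_pow, map_natCast]
    rw [hba]
    exact Polynomial.scaleRoots_eval₂_eq_zero _ hfb
  have hunit : IsUnit (algebraMap A S ((p : A) ^ n)) := by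
    rw [map_pow]
    exact (IsLocalization.Away.algebraMap_isUnit (S := S) (p : A)).pow n
  set s : S := ↑hunit.unit⁻¹ * algebraMap A S a with hs
  have hsa : algebraMap A S a = algebraMap A S ((p : A) ^ n) * s := by
    rw [hs, ← mul_assoc, IsUnit.mul_val_inv, one_mul]
  have hsint : IsIntegral A s := by
    refine ⟨f, hfmonic, ?_⟩
    have h0 : Polynomial.eval₂ (algebraMap A S) (algebraMap A S ((p : A) ^ n) * s) g = 0 := by
      rw [← hsa, Polynomial.eval₂_at_apply, hga, map_zero]
    rw [hg, Polynomial.scaleRoots_eval₂_mul] at h0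
    have := (hunit.pow f.natDegree).mul_right_eq_zero.mp h0
    exact this
  obtain ⟨a', ha'⟩ := hic s hsint
  refine ⟨a', hSinj ?_⟩
  rw [map_mul, ha', hsa]

/-- Let `A → B` be an injective integral extension of rings, with `A` and `B`
`p`-torsion free and `A` integrally closed in `A[1/p]`.  Then for all `n > 0` the induced
map `A/p^nA → B/p^nB` is injective, and hence the induced map of `p`-adic completions
`Â → B̂` is injective. -/
theorem quotients_and_completion_injective_of_integral_extension
    (A B : Type*) [CommRing A] [CommRing B] (p : ℕ) (hp : p.Prime)
    [Algebra A B] (hinj : Function.Injective (algebraMap A B))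
    [Algebra.IsIntegral A B]
    (hAtf : ∀ x : A, (p : A) * x = 0 → x = 0)
    (hBtf : ∀ x : B, (p : B) * x = 0 → x = 0)
    (S : Type*) [CommRing S] [Algebra A S] [IsLocalization.Away (p : A) S]
    (hic : ∀ x : S, IsIntegral A x → x ∈ (algebraMap A S).range) :
    (∀ n : ℕ, 0 < n → Function.Injective (qmap A B p n)) ∧
    (∀ x : adicLim A (p : A), (∀ n, qmap A B p n (x.1 n) = 0) → x = 0) := by
  have hq : ∀ n : ℕ, Function.Injective (qmap A B p n) := by
    intro n
    apply Ideal.quotientMap_injective'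
    intro a ha
    exact key_lemma A B p hinj hAtf S hic n a ha
  refine ⟨fun n _ => hq n, fun x hx => ?_⟩
  have hz : ∀ n, x.1 n = 0 := by
    intro n
    cases n with
    | zero =>
      have hx2 : ∀ n, Ideal.Quotient.factor _ (x.1 (n + 1)) = x.1 n := x.2
      rw [← hx2 0]
      have h1 : x.1 1 = 0 := hq 1 (by rw [hx 1, map_zero])
      rw [h1, map_zero]
    | succ n => exact hq (n + 1) (by rw [hx (n + 1), map_zero])
  exact Subtype.ext (funext hz)
end

section
/- Let S be a ring and c ∈ S, p ∈ S such that S is p-adically complete and (c, p^n) and (p^n, c) are regular sequences on S for all n > 0. Then S/cS is p-adically complete and separated, i.e., the natural map S/cS → lim_n S/(c, p^n)S is an isomorphism. -/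
/-- The chain of ideals `(c, p^n)` is decreasing. -/
theorem span_pair_le (S : Type*) [CommRing S] (c t : S) (n : ℕ) :
    Ideal.span {c, t ^ (n + 1)} ≤ Ideal.span {c, t ^ n} := by
  rw [Ideal.span_le]
  rintro x (rfl | rfl)
  · exact Ideal.subset_span (Set.mem_insert _ _)
  · rw [SetLike.mem_coe, pow_succ]
    exact Ideal.mul_mem_right _ _ (Ideal.subset_span (Set.mem_insert_of_mem _ rfl))

/-- Let `S` be a `p`-adically complete ring and `c ∈ S` such that `(c, p^n)`
and `(p^n, c)` are regular sequences on `S` for all `n > 0`.  Then `S/cS` is `p`-adically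
complete and separated: the natural map `S/cS → lim_n S/(c, p^n)S` is an isomorphism,
expressed by saying that the natural map `S → lim_n S/(c, p^n)S` is surjective with kernel
exactly `cS`. -/
theorem quotient_padically_complete
    (S : Type*) [CommRing S] (p : ℕ) (hp : p.Prime) (c : S)
    -- `S` is `p`-adically complete:
    (hcomplete : Function.Bijective (toQuotLim S (fun n => Ideal.span {(p : S) ^ n})
      (fun n => Ideal.span_singleton_le_span_singleton.mpr (pow_dvd_pow _ (Nat.le_succ n)))))
    -- `(p^n, c)` is a regular sequence on `S` for all `n > 0`:
    (h1 : ∀ n : ℕ, 0 < n → ∀ x : S, (p : S) ^ n * x = 0 → x = 0)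
    (h2 : ∀ n : ℕ, 0 < n → ∀ x : S,
      c * x ∈ Ideal.span {(p : S) ^ n} → x ∈ Ideal.span {(p : S) ^ n})
    -- `(c, p^n)` is a regular sequence on `S` for all `n > 0`:
    (h3 : ∀ x : S, c * x = 0 → x = 0)
    (h4 : ∀ n : ℕ, 0 < n → ∀ x : S,
      (p : S) ^ n * x ∈ Ideal.span {c} → x ∈ Ideal.span {c}) :
    Function.Surjective (toQuotLim S (fun n => Ideal.span {c, (p : S) ^ n})
        (span_pair_le S c (p : S))) ∧
      RingHom.ker (toQuotLim S (fun n => Ideal.span {c, (p : S) ^ n})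
        (span_pair_le S c (p : S))) = Ideal.span {c} := by
  classical
  -- separatedness of `S` from injectivity of the completion map
  have hsep : ∀ x : S, (∀ n, x ∈ Ideal.span {(p : S) ^ n}) → x = 0 := by
    intro x hx
    have : toQuotLim S (fun n => Ideal.span {(p : S) ^ n})
        (fun n => Ideal.span_singleton_le_span_singleton.mpr (pow_dvd_pow _ (Nat.le_succ n))) x
        = toQuotLim S (fun n => Ideal.span {(p : S) ^ n})
        (fun n => Ideal.span_singleton_le_span_singleton.mpr (pow_dvd_pow _ (Nat.le_succ n))) 0 := by
      apply Subtype.ext; funext n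
      show Ideal.Quotient.mk _ x = Ideal.Quotient.mk _ (0 : S)
      rw [map_zero, Ideal.Quotient.eq_zero_iff_mem]
      exact hx n
    exact hcomplete.1 this
  -- completeness of `S` from surjectivity of the completion map
  have hcompl : ∀ a : ℕ → S, (∀ n, a (n + 1) - a n ∈ Ideal.span {(p : S) ^ n}) →
      ∃ s : S, ∀ n, s - a n ∈ Ideal.span {(p : S) ^ n} := by
    intro a ha
    have hmem : (fun n => Ideal.Quotient.mk (Ideal.span {(p : S) ^ n}) (a n)) ∈
        quotLim S (fun n => Ideal.span {(p : S) ^ n})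
          (fun n => Ideal.span_singleton_le_span_singleton.mpr (pow_dvd_pow _ (Nat.le_succ n))) := by
      intro n
      rw [Ideal.Quotient.factor_mk, Ideal.Quotient.eq]
      exact ha n
    obtain ⟨s, hs⟩ := hcomplete.2 ⟨_, hmem⟩
    refine ⟨s, fun n => ?_⟩
    have h := congrFun (congrArg Subtype.val hs) n
    rw [← Ideal.Quotient.eq]
    exact h
  have hcmem : ∀ n, c ∈ Ideal.span {c, (p : S) ^ n} :=
    fun n => Ideal.subset_span (Set.mem_insert _ _)
  have hpmem : ∀ n, Ideal.span {(p : S) ^ n} ≤ Ideal.span {c, (p : S) ^ n} := by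
    intro n
    rw [Ideal.span_le, Set.singleton_subset_iff]
    exact Ideal.subset_span (Set.mem_insert_of_mem _ rfl)
  constructor
  · -- surjectivity
    rintro ⟨f, hf⟩
    choose s hs using fun n => Ideal.Quotient.mk_surjective (f n)
    have hdiff : ∀ n, s (n + 1) - s n ∈ Ideal.span {c, (p : S) ^ n} := by
      intro n
      rw [← Ideal.Quotient.eq, hs n]
      have hfn := hf n
      rw [← hs (n + 1), Ideal.Quotient.factor_mk] at hfn
      exact hfn
    have hex : ∀ n, ∃ u v : S, u * c + v * (p : S) ^ n = s (n + 1) - s n :=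
      fun n => Ideal.mem_span_pair.mp (hdiff n)
    choose u v huv using hex
    set A : ℕ → S := fun n => s n - c * (∑ i ∈ Finset.range n, u i) with hA
    have hAd : ∀ n, A (n + 1) - A n ∈ Ideal.span {(p : S) ^ n} := by
      intro n
      have : A (n + 1) - A n = v n * (p : S) ^ n := by
        simp only [hA, Finset.sum_range_succ]
        linear_combination -(huv n)
      rw [this, Ideal.mem_span_singleton]
      exact Dvd.intro_left _ rfl
    obtain ⟨t, ht⟩ := hcompl A hAd
    refine ⟨t, ?_⟩
    apply Subtype.ext; funext n
    show Ideal.Quotient.mk _ t = f n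
    rw [← hs n, Ideal.Quotient.eq]
    have : t - s n = (t - A n) - c * (∑ i ∈ Finset.range n, u i) := by
      simp only [hA]; ring
    rw [this]
    exact sub_mem (hpmem n (ht n)) (Ideal.mul_mem_right _ _ (hcmem n))
  · -- kernel
    ext x
    simp only [RingHom.mem_ker]
    constructor
    · intro hx
      have hxn : ∀ n, x ∈ Ideal.span {c, (p : S) ^ n} := by
        intro n
        have h := congrFun (congrArg Subtype.val hx) n
        exact Ideal.Quotient.eq_zero_iff_mem.mp h
      choose A B hAB using fun n => Ideal.mem_span_pair.mp (hxn n)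
      have hAd : ∀ n, A (n + 1) - A n ∈ Ideal.span {(p : S) ^ n} := by
        intro n
        rcases Nat.eq_zero_or_pos n with rfl | hn
        · rw [Ideal.mem_span_singleton, pow_zero]
          exact one_dvd _
        · apply h2 n hn
          have heq : c * (A (n + 1) - A n) =
              B n * (p : S) ^ n - (B (n + 1) * (p : S) ^ n) * (p : S) := by
            have h1' := hAB n
            have h2' := hAB (n + 1)
            rw [pow_succ] at h2'
            linear_combination h2' - h1'
          rw [heq, Ideal.mem_span_singleton]
          exact dvd_sub (Dvd.intro_left _ rfl) (Dvd.dvd.mul_right (Dvd.intro_left _ rfl) _)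
      obtain ⟨a, ha⟩ := hcompl A hAd
      have hzero : x - c * a = 0 := by
        apply hsep
        intro n
        have : x - c * a = B n * (p : S) ^ n - c * (a - A n) := by
          linear_combination -(hAB n)
        rw [this]
        refine sub_mem ?_ (Ideal.mul_mem_left _ _ (ha n))
        rw [Ideal.mem_span_singleton]
        exact Dvd.intro_left _ rfl
      rw [Ideal.mem_span_singleton]
      exact ⟨a, by linear_combination hzero⟩
    · intro hx
      apply Subtype.ext; funext n
      show Ideal.Quotient.mk _ x = 0
      rw [Ideal.Quotient.eq_zero_iff_mem]
      refine Ideal.span_mono ?_ hx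
      exact Set.singleton_subset_iff.mpr (Set.mem_insert _ _)
end

section
/- Let A be a p-torsion free ring whose p-adic completion is a domain. Then the tilt A^♭ is an integral domain, provided the Frobenius on A/pA is surjective and A admits compatible p-power roots of p with A integrally closed in A[1/p]. -/
set_option linter.unusedSectionVars false

noncomputable section SharpAux

variable {A : Type*} [CommRing A] {p : ℕ} [Fact p.Prime]

/-- a choice of lift from a quotient -/
noncomputable def qlift {I : Ideal A} (y : A ⧸ I) : A :=
  (Ideal.Quotient.mk_surjective y).choose

lemma mk_qlift {I : Ideal A} (y : A ⧸ I) : Ideal.Quotient.mk I (qlift y) = y :=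
  (Ideal.Quotient.mk_surjective y).choose_spec

lemma key_cong {a b : A} (h : Ideal.Quotient.mk (Ideal.span {(p : A)}) a
    = Ideal.Quotient.mk (Ideal.span {(p : A)}) b) (n : ℕ) :
    Ideal.Quotient.mk (Ideal.span {(p : A) ^ n}) (a ^ p ^ n)
      = Ideal.Quotient.mk (Ideal.span {(p : A) ^ n}) (b ^ p ^ n) := by
  rw [Ideal.Quotient.eq] at h ⊢
  rw [Ideal.mem_span_singleton] at h ⊢
  exact dvd_trans (pow_dvd_pow _ n.le_succ) (dvd_sub_pow_of_dvd_sub h n)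

variable [CharP (A ⧸ Ideal.span {(p : A)}) p]

lemma Perfection.coeff_pthRoot (f : Perfection (A ⧸ Ideal.span {(p : A)}) p) (n : ℕ) :
    Perfection.coeff (A ⧸ Ideal.span {(p : A)}) p n (Perfection.pthRoot _ p f)
      = Perfection.coeff (A ⧸ Ideal.span {(p : A)}) p (n + 1) f := rfl

/-- the underlying family of the sharp map -/
noncomputable def sharpFun (x : Perfection (A ⧸ Ideal.span {(p : A)}) p) :
    ∀ n, A ⧸ Ideal.span {(p : A) ^ n} :=
  fun n => Ideal.Quotient.mk _
    ((qlift (Perfection.coeff (A ⧸ Ideal.span {(p : A)}) p n x)) ^ p ^ n)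

lemma sharpFun_mem (x : Perfection (A ⧸ Ideal.span {(p : A)}) p) :
    sharpFun x ∈ adicLim A (p : A) := by
  intro n
  show Ideal.Quotient.factor _ (Ideal.Quotient.mk _ _) = Ideal.Quotient.mk _ _
  rw [Ideal.Quotient.factor_mk]
  have h : Ideal.Quotient.mk (Ideal.span {(p : A)})
      ((qlift (Perfection.coeff (A ⧸ Ideal.span {(p : A)}) p (n + 1) x)) ^ p)
      = Ideal.Quotient.mk (Ideal.span {(p : A)})
        (qlift (Perfection.coeff (A ⧸ Ideal.span {(p : A)}) p n x)) := by
    rw [map_pow, mk_qlift, mk_qlift, Perfection.coeff_pow_p']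
  have := key_cong h n
  rwa [← pow_mul, ← pow_succ'] at this

/-- the multiplicative sharp map from the tilt to the completion -/
noncomputable def sharp (x : Perfection (A ⧸ Ideal.span {(p : A)}) p) :
    adicLim A (p : A) :=
  ⟨sharpFun x, sharpFun_mem x⟩

lemma sharp_mul (x y : Perfection (A ⧸ Ideal.span {(p : A)}) p) :
    sharp (x * y) = sharp x * sharp y := by
  apply Subtype.ext
  funext n
  show sharpFun (x * y) n = sharpFun x n * sharpFun y n
  unfold sharpFun
  rw [← map_mul, ← mul_pow]
  apply key_cong
  simp only [mk_qlift, map_mul]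

lemma sharp_zero : sharp (0 : Perfection (A ⧸ Ideal.span {(p : A)}) p) = 0 := by
  apply Subtype.ext
  funext n
  show sharpFun 0 n = 0
  unfold sharpFun
  have h : Ideal.Quotient.mk (Ideal.span {(p : A)})
      (qlift (Perfection.coeff (A ⧸ Ideal.span {(p : A)}) p n (0 : Perfection _ p)))
      = Ideal.Quotient.mk (Ideal.span {(p : A)}) 0 := by
    rw [mk_qlift, map_zero, map_zero]
  have := key_cong h n
  rw [zero_pow (pow_ne_zero n (Fact.out : p.Prime).ne_zero), map_zero] at this
  exact this

lemma sharp_pthRoot_pow (x : Perfection (A ⧸ Ideal.span {(p : A)}) p) :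
    (sharp (Perfection.pthRoot (A ⧸ Ideal.span {(p : A)}) p x)) ^ p = sharp x := by
  apply Subtype.ext
  funext n
  show (sharpFun (Perfection.pthRoot _ p x) n) ^ p = sharpFun x n
  unfold sharpFun
  rw [← map_pow, ← pow_mul, mul_comm (p ^ n) p, pow_mul]
  apply key_cong
  rw [map_pow, mk_qlift, mk_qlift, Perfection.coeff_pthRoot, Perfection.coeff_pow_p']

lemma sharp_eq_zero (hcompl : IsDomain (adicLim A (p : A)))
    (x : Perfection (A ⧸ Ideal.span {(p : A)}) p) (hx : sharp x = 0) : x = 0 := by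
  have key : ∀ n (z : Perfection (A ⧸ Ideal.span {(p : A)}) p), sharp z = 0 →
      Perfection.coeff (A ⧸ Ideal.span {(p : A)}) p n z = 0 := by
    intro n
    induction n with
    | zero =>
      intro z hz
      have h1 : sharpFun z 1 = 0 := congrFun (congrArg Subtype.val hz) 1
      unfold sharpFun at h1
      rw [Ideal.Quotient.eq_zero_iff_mem, pow_one, pow_one, ← Ideal.Quotient.eq_zero_iff_mem,
        map_pow, mk_qlift, Perfection.coeff_pow_p'] at h1
      exact h1
    | succ n ih =>
      intro z hz
      have hroot : sharp (Perfection.pthRoot (A ⧸ Ideal.span {(p : A)}) p z) = 0 := by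
        have := sharp_pthRoot_pow z
        rw [hz] at this
        exact pow_eq_zero_iff (Fact.out : p.Prime).ne_zero |>.mp this
      have := ih _ hroot
      rwa [Perfection.coeff_pthRoot] at this
  exact Perfection.ext fun n => by rw [key n x hx, map_zero]

end SharpAux

/-- Let `A` be a `p`-torsion free ring whose `p`-adic completion is an
integral domain.  If the Frobenius on `A/pA` is surjective and `A` admits compatible
`p`-power roots of `p` with `A` integrally closed in `A[1/p]`, then the tilt
`A^♭ = lim_F A/pA` is an integral domain. -/
theorem tilt_isDomain
    (A : Type*) [CommRing A] (p : ℕ) [Fact p.Prime]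
    [CharP (A ⧸ Ideal.span {(p : A)}) p]
    (hptf : ∀ x : A, (p : A) * x = 0 → x = 0)
    (hcompl : IsDomain (adicLim A (p : A)))
    (hfrob : ∀ y : A ⧸ Ideal.span {(p : A)}, ∃ x, x ^ p = y)
    (r : ℕ → A) (hr0 : r 0 = (p : A)) (hr : ∀ n, r (n + 1) ^ p = r n)
    (S : Type*) [CommRing S] [Algebra A S] [IsLocalization.Away (p : A) S]
    (hic : ∀ x : S, IsIntegral A x → x ∈ (algebraMap A S).range) :
    IsDomain (Perfection (A ⧸ Ideal.span {(p : A)}) p) := by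
  -- A/p is nontrivial
  haveI := hcompl.toNontrivial
  have hAp : Nontrivial (A ⧸ Ideal.span {(p : A)}) := by
    by_contra h
    rw [not_nontrivial_iff_subsingleton] at h
    have h1 : (1 : A) ∈ Ideal.span {(p : A)} := by
      rw [← Ideal.Quotient.eq_zero_iff_mem]
      exact Subsingleton.elim _ _
    rw [Ideal.mem_span_singleton] at h1
    have : (1 : adicLim A (p : A)) = 0 := by
      apply Subtype.ext
      funext n
      show (1 : A ⧸ Ideal.span {(p : A) ^ n}) = 0
      rw [← map_one (Ideal.Quotient.mk (Ideal.span {(p : A) ^ n})),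
        Ideal.Quotient.eq_zero_iff_mem, Ideal.mem_span_singleton]
      simpa using pow_dvd_pow_of_dvd h1 n
    exact one_ne_zero this
  have hnt : Nontrivial (Perfection (A ⧸ Ideal.span {(p : A)}) p) := by
    refine ⟨0, 1, fun h => ?_⟩
    have := congrArg (Perfection.coeff (A ⧸ Ideal.span {(p : A)}) p 0) h
    rw [map_zero, map_one] at this
    exact zero_ne_one this
  have hnzd : NoZeroDivisors (Perfection (A ⧸ Ideal.span {(p : A)}) p) := by
    constructor
    intro x y hxy
    have : sharp x * sharp y = 0 := by
      rw [← sharp_mul, hxy, sharp_zero]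
    rcases mul_eq_zero.mp this with h | h
    · exact Or.inl (sharp_eq_zero hcompl x h)
    · exact Or.inr (sharp_eq_zero hcompl y h)
  exact NoZeroDivisors.to_isDomain _
end
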